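/- Let X ⊆ R^n be a convex set and f : X → R be radially lower semicontinuous and pseudoconvex with respect to the lower Dini derivative. Then f is semistrictly quasiconvex, i.e., for all x, y ∈ X with f(y) < f(x) and all t ∈ (0,1), f(x + t(y-x)) < f(x). -/

import Mathlib

open Filter Set

/-- Lower Dini directional derivative of a function of one real variable. -/
noncomputable def dini (φ : ℝ → ℝ) (s u : ℝ) : ℝ :=
  liminf (fun h : ℝ => (φ (s + h * u) - φ s) / h) (nhdsWithin 0 (Ioi 0))

/-- Pseudoconvexity w.r.t. the lower Dini derivative, one variable. -/
def PseudoconvexOn (φ : ℝ → ℝ) (I : Set ℝ) : Prop :=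
  ∀ s ∈ I, ∀ t ∈ I, φ t < φ s → dini φ s (t - s) < 0

/-- A direction `u` is admissible at `s` relative to `I`. -/
def Admissible (I : Set ℝ) (s u : ℝ) : Prop :=
  ∃ δ > 0, ∀ h ∈ Ioo (0:ℝ) δ, s + h * u ∈ I

/-- `s` is a stationary point of `φ` relative to `I`. -/
def Stationary (φ : ℝ → ℝ) (I : Set ℝ) (s : ℝ) : Prop :=
  ∀ u : ℝ, Admissible I s u → 0 ≤ dini φ s u

/-- Lower Dini directional derivative of `f : ℝⁿ → ℝ` at `x` in direction `u`. -/
noncomputable def diniV {n : ℕ} (f : (Fin n → ℝ) → ℝ) (x u : Fin n → ℝ) : ℝ :=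
  liminf (fun h : ℝ => (f (x + h • u) - f x) / h) (nhdsWithin 0 (Ioi 0))

/-- Pseudoconvexity of `f` on `X ⊆ ℝⁿ` w.r.t. the lower Dini derivative. -/
def PseudoconvexOnV {n : ℕ} (f : (Fin n → ℝ) → ℝ) (X : Set (Fin n → ℝ)) : Prop :=
  ∀ x ∈ X, ∀ y ∈ X, f y < f x → diniV f x (y - x) < 0

/-- A direction `u` is admissible at `x` relative to `X`. -/
def AdmissibleV {n : ℕ} (X : Set (Fin n → ℝ)) (x u : Fin n → ℝ) : Prop :=
  ∃ δ > 0, ∀ h ∈ Ioo (0:ℝ) δ, x + h • u ∈ X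

/-- `x` is a stationary point of `f` relative to `X`. -/
def StationaryV {n : ℕ} (f : (Fin n → ℝ) → ℝ) (X : Set (Fin n → ℝ)) (x : Fin n → ℝ) : Prop :=
  ∀ u : Fin n → ℝ, AdmissibleV X x u → 0 ≤ diniV f x u

/-- `f` is radially lower semicontinuous on `X`: lsc on every segment. -/
def RadiallyLSC {n : ℕ} (f : (Fin n → ℝ) → ℝ) (X : Set (Fin n → ℝ)) : Prop :=
  ∀ x ∈ X, ∀ y ∈ X,
    LowerSemicontinuousOn (fun t : ℝ => f (x + t • (y - x))) (Icc 0 1)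

/-- `f` is radially upper semicontinuous on `X`: usc on every segment. -/
def RadiallyUSC {n : ℕ} (f : (Fin n → ℝ) → ℝ) (X : Set (Fin n → ℝ)) : Prop :=
  ∀ x ∈ X, ∀ y ∈ X,
    UpperSemicontinuousOn (fun t : ℝ => f (x + t • (y - x))) (Icc 0 1)

/-- `f` is quasiconvex on `X`. -/
def QuasiconvexOnSeg {n : ℕ} (f : (Fin n → ℝ) → ℝ) (X : Set (Fin n → ℝ)) : Prop :=
  ∀ x ∈ X, ∀ y ∈ X, ∀ t ∈ Icc (0:ℝ) 1, f (x + t • (y - x)) ≤ max (f x) (f y)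

/-- `f` is semistrictly quasiconvex on `X`. -/
def SemistrictlyQuasiconvexOn {n : ℕ} (f : (Fin n → ℝ) → ℝ) (X : Set (Fin n → ℝ)) : Prop :=
  ∀ x ∈ X, ∀ y ∈ X, f y < f x → ∀ t ∈ Ioo (0:ℝ) 1, f (x + t • (y - x)) < f x

/-!
Along a segment `f` becomes a function `g` of one real variable on `[0, 1]`, lower
semicontinuous and Dini-pseudoconvex. Such a `g` is quasiconvex: if `g s > r ≥ g a, g b` with
`a < s < b`, lower semicontinuity keeps `g > r` on some `[s, q]`, and a minimiser `μ` of `g` there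
has a nonnegative lower Dini derivative in every direction that stays in `[s, q]`, while
pseudoconvexity makes the derivative towards `a` or `b` negative. If moreover `g 1 < g 0`,
pseudoconvexity at `0` gives `r ∈ (0, t)` with `g r < g 0`, and quasiconvexity on `[r, 1]` gives
`g t ≤ max (g r) (g 1) < g 0`.
-/

open Topology

section OneVariable

variable {g : ℝ → ℝ} {I K : Set ℝ}

lemma dini_nonneg_of_eventually_le {s u : ℝ} (h : ∀ᶠ ε in 𝓝[>] 0, g s ≤ g (s + ε * u)) :
    0 ≤ dini g s u := by
  have hq : ∀ᶠ ε in 𝓝[>] (0 : ℝ), 0 ≤ (g (s + ε * u) - g s) / ε := by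
    filter_upwards [h, self_mem_nhdsWithin] with ε hle (hε : 0 < ε)
    exact div_nonneg (sub_nonneg.2 hle) hε.le
  rw [dini, liminf_eq]
  exact Real.sSup_nonneg' ⟨0, hq, le_rfl⟩

lemma frequently_lt_of_dini_neg {s u : ℝ} (h : dini g s u < 0) :
    ∃ᶠ ε in 𝓝[>] 0, g (s + ε * u) < g s := by
  contrapose! h
  exact dini_nonneg_of_eventually_le (by simpa only [not_frequently, not_lt] using h)

lemma IsMinOn.stationary {μ : ℝ} (hμ : IsMinOn g K μ) : Stationary g K μ := by
  rintro u ⟨δ, hδ, hu⟩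
  apply dini_nonneg_of_eventually_le
  filter_upwards [Ioo_mem_nhdsGT hδ] with ε hε
  exact hμ (hu ε hε)

lemma Convex.admissible (hK : Convex ℝ K) {μ ν u c : ℝ} (hμ : μ ∈ K) (hν : ν ∈ K) (hc : 0 < c)
    (hνμ : ν = μ + c * u) : Admissible K μ u := by
  refine ⟨c, hc, fun ε hε => ?_⟩
  have h := hK.add_smul_sub_mem hμ hν ⟨(div_pos hε.1 hc).le, (div_le_one hc).2 hε.2.le⟩
  convert h using 1
  rw [hνμ, smul_eq_mul]
  field_simp
  ring

lemma PseudoconvexOn.le_of_stationary (hpc : PseudoconvexOn g I) {μ t : ℝ} (hμ : μ ∈ I)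
    (ht : t ∈ I) (hst : Stationary g K μ) (hadm : Admissible K μ (t - μ)) : g μ ≤ g t :=
  not_lt.1 fun hlt => (hpc μ hμ t ht hlt).not_ge (hst _ hadm)

lemma LowerSemicontinuousWithinAt.exists_Icc_lt {s b r : ℝ}
    (hg : LowerSemicontinuousWithinAt g I s) (hr : r < g s) (hsb : s < b) (hI : Ico s b ⊆ I) :
    ∃ q ∈ Ioo s b, ∀ x ∈ Icc s q, r < g x := by
  have hge : ∀ᶠ x in 𝓝[≥] s, r < g x :=
    (hg r hr).filter_mono ((nhdsWithin_le_of_mem (Ico_mem_nhdsGE hsb)).trans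
      (nhdsWithin_mono _ hI))
  obtain ⟨q, hq, hsub⟩ := mem_nhdsGE_iff_exists_Icc_subset.1 (hge.and (Ico_mem_nhdsGE hsb))
  exact ⟨q, ⟨hq, (hsub (right_mem_Icc.2 hq.le)).2.2⟩, fun x hx => (hsub hx).1⟩

theorem PseudoconvexOn.quasiconvexOn (hI : Convex ℝ I) (hg : LowerSemicontinuousOn g I)
    (hpc : PseudoconvexOn g I) : QuasiconvexOn ℝ I g := by
  intro r
  rw [convex_iff_ordConnected]
  refine ⟨fun a ha b hb s hs => ⟨hI.ordConnected.out ha.1 hb.1 hs, ?_⟩⟩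
  by_contra! hrs
  have has : a < s := hs.1.lt_of_ne (by rintro rfl; exact hrs.not_ge ha.2)
  have hsb : s < b := hs.2.lt_of_ne (by rintro rfl; exact hrs.not_ge hb.2)
  have habI : Icc a b ⊆ I := hI.ordConnected.out ha.1 hb.1
  obtain ⟨q, hq, hgq⟩ := LowerSemicontinuousWithinAt.exists_Icc_lt (hg s (habI hs)) hrs hsb
    (Ico_subset_Icc_self.trans ((Icc_subset_Icc has.le le_rfl).trans habI))
  have hK : Icc s q ⊆ I := (Icc_subset_Icc has.le hq.2.le).trans habI
  obtain ⟨μ, hμ, hmin⟩ := (hg.mono hK).exists_isMinOn (nonempty_Icc.2 hq.1.le) isCompact_Icc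
  have hrμ := hgq μ hμ
  -- `μ` misses one endpoint of `[s, q]`, so a step towards `b` or towards `a` stays in `[s, q]`.
  rcases hμ.2.lt_or_eq with hμq | rfl
  · have hbμ : 0 < b - μ := by linarith [hq.2]
    have := hpc.le_of_stationary (hK hμ) hb.1 hmin.stationary
      ((convex_Icc s q).admissible hμ (right_mem_Icc.2 hq.1.le) (div_pos (sub_pos.2 hμq) hbμ)
        (by field_simp; ring))
    linarith [hb.2]
  · have hμa : 0 < μ - a := by linarith [hq.1]
    have := hpc.le_of_stationary (hK hμ) ha.1 hmin.stationary
      ((convex_Icc s μ).admissible hμ (left_mem_Icc.2 hq.1.le) (div_pos (sub_pos.2 hq.1) hμa)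
        (by field_simp; ring))
    linarith [ha.2]

theorem PseudoconvexOn.apply_add_mul_sub_lt (hI : Convex ℝ I) (hg : LowerSemicontinuousOn g I)
    (hpc : PseudoconvexOn g I) {a b θ : ℝ} (ha : a ∈ I) (hb : b ∈ I) (hab : g b < g a)
    (hθ : θ ∈ Ioo 0 1) : g (a + θ * (b - a)) < g a := by
  obtain ⟨ε, hgε, hε0, hεθ⟩ :=
    ((frequently_lt_of_dini_neg (hpc a ha b hb hab)).and_eventually (Ioo_mem_nhdsGT hθ.1)).exists
  set r := a + ε * (b - a)
  have hr : r ∈ I := hI.add_smul_sub_mem ha hb ⟨hε0.le, (hεθ.trans hθ.2).le⟩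
  have hε1 : 0 < 1 - ε := by linarith [hθ.2]
  -- the point lies between `r` and `b`, so quasiconvexity bounds `g` there by `max (g r) (g b)`
  have hmem := (hpc.quasiconvexOn hI hg (max (g r) (g b))).add_smul_sub_mem
    ⟨hr, le_max_left _ _⟩ ⟨hb, le_max_right _ _⟩ (t := (θ - ε) / (1 - ε))
    ⟨div_nonneg (by linarith) hε1.le, (div_le_one hε1).2 (by linarith [hθ.2])⟩
  have hpt : r + ((θ - ε) / (1 - ε)) • (b - r) = a + θ * (b - a) := by
    simp only [r, smul_eq_mul]
    field_simp
    ring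
  rw [hpt] at hmem
  exact hmem.2.trans_lt (max_lt hgε hab)

end OneVariable

section Segment

variable {n : ℕ} {f : (Fin n → ℝ) → ℝ}

lemma dini_comp_line (x v : Fin n → ℝ) (s u : ℝ) :
    dini (fun s => f (x + s • v)) s u = diniV f (x + s • v) (u • v) := by
  simp only [dini, diniV, add_smul, mul_smul, add_assoc]

lemma PseudoconvexOnV.comp_segment {X : Set (Fin n → ℝ)} (hX : Convex ℝ X)
    (hpc : PseudoconvexOnV f X) {x y : Fin n → ℝ} (hx : x ∈ X) (hy : y ∈ X) :
    PseudoconvexOn (fun s => f (x + s • (y - x))) (Icc 0 1) := by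
  intro s hs r hr hlt
  have h := hpc _ (hX.add_smul_sub_mem hx hy hs) _ (hX.add_smul_sub_mem hx hy hr) hlt
  rwa [add_sub_add_left_eq_sub, ← sub_smul, ← dini_comp_line] at h

end Segment

theorem stmt8 {n : ℕ} (X : Set (Fin n → ℝ)) (hX : Convex ℝ X)
    (f : (Fin n → ℝ) → ℝ) (hlsc : RadiallyLSC f X) (hpc : PseudoconvexOnV f X) :
    SemistrictlyQuasiconvexOn f X := by
  intro x hx y hy hxy t ht
  simpa using (hpc.comp_segment hX hx hy).apply_add_mul_sub_lt (convex_Icc 0 1)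
    (hlsc x hx y hy) (left_mem_Icc.2 zero_le_one) (right_mem_Icc.2 zero_le_one)
    (by simpa using hxy) ht
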